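/- Let I be an open interval containing 0 and let x : I → ℝ be twice differentiable with x''(t) = π(1 + x'(t)²) for all t ∈ I and x'(0) = v. Then every t ∈ I satisfies t < 1/2 − arctan(v)/π. In particular, if v ≥ 0 then every t ∈ I satisfies t < 1/2, so 1 ∉ I: the time-1 exponential map of the SODE ẍ = π(1 + ẋ²) on ℝ is undefined at every initial velocity v ≥ 0. -/

import Mathlib

/-!
The velocity `x'` solves the Riccati equation `y' = π (1 + y²)`, whose solutions are the
functions `tan (π t + k)`: `arctan ∘ x'` has derivative `π`, so `arctan (x' t) = arctan v + π t`
on the interval, and `arctan < π / 2` forces `π t < π / 2 - arctan v`.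
-/

open Real

theorem Set.OrdConnected.eq_of_forall_hasDerivAt_zero {E : Type*} [NormedAddCommGroup E]
    [NormedSpace ℝ E] {s : Set ℝ} (hs : s.OrdConnected) {f : ℝ → E}
    (hf : ∀ t ∈ s, HasDerivAt f 0 t) {a b : ℝ} (ha : a ∈ s) (hb : b ∈ s) : f b = f a := by
  have h := (convex_iff_ordConnected.mpr hs).norm_image_sub_le_of_norm_hasDerivWithin_le
    (fun t ht => (hf t ht).hasDerivWithinAt) (fun _ _ => norm_zero.le) ha hb
  rwa [zero_mul, norm_le_zero_iff, sub_eq_zero] at h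

theorem hasDerivAt_arctan_of_riccati {y : ℝ → ℝ} {c t : ℝ}
    (hy : HasDerivAt y (c * (1 + y t ^ 2)) t) : HasDerivAt (fun s => arctan (y s)) c t := by
  convert hy.arctan using 1
  field_simp

theorem arctan_eq_of_riccati {s : Set ℝ} (hs : s.OrdConnected) {y : ℝ → ℝ} {c : ℝ}
    (hy : ∀ t ∈ s, HasDerivAt y (c * (1 + y t ^ 2)) t) {a b : ℝ} (ha : a ∈ s) (hb : b ∈ s) :
    arctan (y b) = arctan (y a) + c * (b - a) := by
  have hconst := hs.eq_of_forall_hasDerivAt_zero (f := fun t => arctan (y t) - t * c)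
    (fun t ht => sub_self c ▸ (hasDerivAt_arctan_of_riccati (hy t ht)).sub (hasDerivAt_mul_const c))
    ha hb
  linarith

theorem time_one_exponential_undefined_general
    (I : Set ℝ) (hconn : I.OrdConnected) (h0 : (0 : ℝ) ∈ I)
    (x' : ℝ → ℝ) (v : ℝ)
    (hx' : ∀ t ∈ I, HasDerivAt x' (π * (1 + x' t ^ 2)) t)
    (hv : x' 0 = v) :
    (∀ t ∈ I, t < 1 / 2 - Real.arctan v / π) ∧
    (0 ≤ v → (∀ t ∈ I, t < 1 / 2) ∧ (1 : ℝ) ∉ I) := by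
  have bound : ∀ t ∈ I, t < 1 / 2 - arctan v / π := by
    intro t ht
    have h := arctan_eq_of_riccati hconn hx' h0 ht
    rw [hv, sub_zero] at h
    have hlt := arctan_lt_pi_div_two (x' t)
    rw [show 1 / 2 - arctan v / π = (π / 2 - arctan v) / π by field_simp, lt_div_iff₀ pi_pos]
    linarith
  refine ⟨bound, fun hv₀ => ?_⟩
  have half : ∀ t ∈ I, t < 1 / 2 := fun t ht => by
    have := div_nonneg (arctan_nonneg.mpr hv₀) pi_pos.le
    linarith [bound t ht]
  exact ⟨half, fun h1 => by linarith [half 1 h1]⟩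

/-- Any solution on an open interval `I ∋ 0` of the SODE
`ẍ = π (1 + ẋ²)` with initial velocity `x'(0) = v` satisfies
`t < 1/2 − arctan v / π` for every `t ∈ I`; in particular, if `v ≥ 0` then
every `t ∈ I` satisfies `t < 1/2`, so `1 ∉ I`: the time-1 exponential map of
this SODE is undefined at every initial velocity `v ≥ 0`. -/
theorem time_one_exponential_undefined
    (I : Set ℝ) (hI : IsOpen I) (hconn : I.OrdConnected) (h0 : (0 : ℝ) ∈ I)
    (x x' : ℝ → ℝ) (v : ℝ)
    (hx : ∀ t ∈ I, HasDerivAt x (x' t) t)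
    (hx' : ∀ t ∈ I, HasDerivAt x' (π * (1 + x' t ^ 2)) t)
    (hv : x' 0 = v) :
    (∀ t ∈ I, t < 1 / 2 - Real.arctan v / π) ∧
    (0 ≤ v → (∀ t ∈ I, t < 1 / 2) ∧ (1 : ℝ) ∉ I) :=
  time_one_exponential_undefined_general I hconn h0 x' v hx' hv
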